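/- Suppose v satisfies K·v = F + r where r is supported so that r = Bᵀ·F_reac (reaction forces enter through the constrained directions), B has orthonormal rows, C spans ker B, and v = C·w + Bᵀ·v_DB. If Cᵀ·K·C·w = Cᵀ·(F - K·Bᵀ·v_DB) (the projected static equation) and Cᵀ·r = 0, then F_reac = B·K·C·w + B·K·Bᵀ·v_DB - B·F. -/
import Mathlib


open Matrix

theorem stmt7 (m n k : ℕ) (K : Matrix (Fin n) (Fin n) ℝ)
    (B : Matrix (Fin m) (Fin n) ℝ) (hB : B * Bᵀ = 1)
    (C : Matrix (Fin n) (Fin k) ℝ) (hBC : B * C = 0)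
    (F r v : Fin n → ℝ) (w : Fin k → ℝ) (F_reac v_DB : Fin m → ℝ)
    (hr : r = Bᵀ.mulVec F_reac)
    (hv : v = C.mulVec w + Bᵀ.mulVec v_DB)
    (hKv : K.mulVec v = F + r)
    (hproj : (Cᵀ * K * C).mulVec w = Cᵀ.mulVec (F - K.mulVec (Bᵀ.mulVec v_DB)))
    (hCr : Cᵀ.mulVec r = 0) :
    F_reac = (B * K * C).mulVec w + (B * K * Bᵀ).mulVec v_DB - B.mulVec F := by
  have h1 : B.mulVec r = F_reac := by
    rw [hr, mulVec_mulVec, hB, one_mulVec]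
  have h2 : B.mulVec (K.mulVec v) = B.mulVec F + B.mulVec r := by
    rw [hKv, mulVec_add]
  rw [h1] at h2
  rw [hv, mulVec_add, mulVec_add] at h2
  simp only [← mulVec_mulVec]
  rw [eq_sub_iff_add_eq, h2]
  abel
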